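/- If n is even (so FQ_n contains an odd cycle), then every shortest odd cycle of FQ_n contains exactly one complementary edge and has length n+1. -/

import Mathlib

/-!
Along a closed walk in `FQ_n` every coordinate is flipped an even number of times. A hypercube
edge flips one coordinate and a complementary edge flips all `n`, so a closed walk with `h`
hypercube and `k` complementary edges has `h + n k` even; for even `n` this makes `h` even,
hence `k` odd when the walk has odd length. Each coordinate is flipped by all `k` complementary
edges and an even number of times in total, hence at least `k + 1` times; summing over the
coordinates gives `h + n k ≥ n (k + 1)`, so the length `h + k` is at least `n + k ≥ n + 1`.
The vertices `1^j 0^(n-j)`, `0 ≤ j ≤ n`, form an odd cycle of length `n + 1`, closed by the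
complementary edge from `1^n` to `0^n`, so a shortest odd closed walk has length exactly
`n + 1`, which forces `k = 1`.
-/

/-- The `n`-dimensional folded hypercube: vertices are binary strings of length `n`,
adjacent iff they differ in exactly one coordinate or in all coordinates. -/
def foldedCube (n : ℕ) : SimpleGraph (Fin n → Bool) :=
  SimpleGraph.fromRel (fun u v =>
    (Finset.univ.filter (fun i => u i ≠ v i)).card = 1 ∨ ∀ i, u i ≠ v i)

/-- External neighbourhood of a vertex set. -/
def extNbhd {V : Type*} (G : SimpleGraph V) (S : Set V) : Set V :=
  {w | w ∉ S ∧ ∃ v ∈ S, G.Adj v w}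

/-- An edge is complementary if its endpoints differ in all coordinates. -/
def IsCompEdge (n : ℕ) (e : Sym2 (Fin n → Bool)) : Prop :=
  ∀ u ∈ e, ∀ v ∈ e, u ≠ v → ∀ i, u i ≠ v i

open SimpleGraph

theorem List.existsUnique_of_countP_eq_one {α : Type*} {l : List α} {p : α → Prop}
    [DecidablePred p] (h : l.countP (p ·) = 1) : ∃! a, a ∈ l ∧ p a := by
  rw [List.countP_eq_length_filter, List.length_eq_one_iff] at h
  obtain ⟨a, ha⟩ := h
  have hmem (b : α) : b ∈ l ∧ p b ↔ b = a := by
    rw [← List.mem_singleton, ← ha, List.mem_filter, decide_eq_true_eq]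
  exact ⟨a, (hmem a).mpr rfl, fun b hb => (hmem b).mp hb⟩

theorem hammingDist_eq_card_iff {ι : Type*} {β : ι → Type*} [Fintype ι]
    [∀ i, DecidableEq (β i)] {x y : ∀ i, β i} :
    hammingDist x y = Fintype.card ι ↔ ∀ i, x i ≠ y i := by
  simp [hammingDist, Finset.card_eq_iff_eq_univ, Finset.eq_univ_iff_forall]

theorem SimpleGraph.Walk.even_countP_darts_ne_iff {V : Type*} {G : SimpleGraph V} (f : V → Bool)
    {u v : V} (p : G.Walk u v) :
    Even (p.darts.countP fun d => f d.fst ≠ f d.snd) ↔ f u = f v := by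
  induction p with
  | nil => simp
  | @cons a b w _ p ih =>
    rw [darts_cons, List.countP_cons]
    by_cases hab : f a = f b
    · simp only [hab, ne_eq, not_true_eq_false, decide_false, Bool.false_eq_true, if_false,
        add_zero, ih]
    · simp only [ne_eq, hab, not_false_eq_true, decide_true, if_true, Nat.even_add_one, ih]
      revert hab
      cases f a <;> cases f b <;> cases f w <;> decide

namespace foldedCube

variable {n : ℕ}

theorem adj_iff {u v : Fin n → Bool} :
    (foldedCube n).Adj u v ↔ u ≠ v ∧ (hammingDist u v = 1 ∨ ∀ i, u i ≠ v i) := by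
  change u ≠ v ∧ ((hammingDist u v = 1 ∨ _) ∨ (hammingDist v u = 1 ∨ _)) ↔ _
  simp only [hammingDist_comm v u, ne_comm (a := v _)]
  tauto

theorem hammingDist_of_adj {u v : Fin n → Bool} (h : (foldedCube n).Adj u v) :
    hammingDist u v = if ∀ i, u i ≠ v i then n else 1 := by
  split_ifs with hcompl
  · simpa using hammingDist_eq_card_iff.mpr hcompl
  · exact (adj_iff.mp h).2.resolve_right hcompl

theorem isCompEdge_dart_edge_iff (d : (foldedCube n).Dart) :
    IsCompEdge n d.edge ↔ ∀ i, d.fst i ≠ d.snd i := by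
  refine ⟨fun h => h _ (Sym2.mem_mk_left _ _) _ (Sym2.mem_mk_right _ _) d.adj.ne, fun h => ?_⟩
  rintro a ha b hb hab i
  rw [Dart.edge, Sym2.mem_iff] at ha hb
  rcases ha with rfl | rfl <;> rcases hb with rfl | rfl
  exacts [(hab rfl).elim, h i, (h i).symm, (hab rfl).elim]

theorem sum_countP_darts_ne (l : List (foldedCube n).Dart) :
    ∑ i, l.countP (fun d => d.fst i ≠ d.snd i) =
      l.countP (fun d => ¬∀ i, d.fst i ≠ d.snd i) +
        n * l.countP (fun d => ∀ i, d.fst i ≠ d.snd i) := by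
  induction l with
  | nil => simp
  | cons d l ih =>
    have hd : ∑ i, (if d.fst i ≠ d.snd i then 1 else 0) = hammingDist d.fst d.snd := by
      simp [hammingDist, Finset.card_filter]
    simp only [List.countP_cons, decide_eq_true_eq, Finset.sum_add_distrib, ih, hd,
      hammingDist_of_adj d.adj]
    split_ifs <;> ring

theorem length_eq_countP_add_countP_compl {u v : Fin n → Bool} (p : (foldedCube n).Walk u v) :
    p.length = p.darts.countP (fun d => ¬∀ i, d.fst i ≠ d.snd i) +
      p.darts.countP (fun d => ∀ i, d.fst i ≠ d.snd i) := by
  rw [← p.length_darts, List.length_eq_countP_add_countP (fun d => ∀ i, d.fst i ≠ d.snd i),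
    add_comm]
  simp only [decide_eq_true_eq]

section ClosedWalk

variable {u : Fin n → Bool} (c : (foldedCube n).Walk u u)

theorem odd_countP_compl (hn : Even n) (hodd : Odd c.length) :
    Odd (c.darts.countP fun d => ∀ i, d.fst i ≠ d.snd i) := by
  have hflips : Even (∑ i, c.darts.countP (fun d => d.fst i ≠ d.snd i)) :=
    Finset.even_sum _ fun i _ => (c.even_countP_darts_ne_iff (· i)).mpr rfl
  rw [sum_countP_darts_ne, Nat.even_add, iff_true_intro (hn.mul_right _), iff_true] at hflips
  rw [length_eq_countP_add_countP_compl, Nat.odd_add'] at hodd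
  exact hodd.mpr hflips

theorem add_countP_compl_le_length
    (hodd : Odd (c.darts.countP fun d => ∀ i, d.fst i ≠ d.snd i)) :
    n + c.darts.countP (fun d => ∀ i, d.fst i ≠ d.snd i) ≤ c.length := by
  set k := c.darts.countP fun d => ∀ i, d.fst i ≠ d.snd i
  have hflips (i : Fin n) : k + 1 ≤ c.darts.countP (fun d => d.fst i ≠ d.snd i) := by
    have hle : k ≤ c.darts.countP (fun d => d.fst i ≠ d.snd i) :=
      List.countP_mono_left fun d _ hd => by simpa using of_decide_eq_true hd i
    have heven := (c.even_countP_darts_ne_iff (· i)).mpr rfl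
    rcases hle.lt_or_eq with hlt | heq
    · exact hlt
    · exact absurd (heq ▸ heven) (Nat.not_even_iff_odd.mpr hodd)
  have hsum := Finset.sum_le_sum fun i (_ : i ∈ Finset.univ) => hflips i
  rw [sum_countP_darts_ne, Finset.sum_const, Finset.card_univ, Fintype.card_fin,
    smul_eq_mul] at hsum
  rw [length_eq_countP_add_countP_compl]
  nlinarith

end ClosedWalk

def prefixVertex (j : ℕ) : Fin n → Bool := fun i => decide (i.val < j)

theorem prefixVertex_injOn : Set.InjOn (prefixVertex (n := n)) (Set.Iic n) := by
  intro j hj k hk h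
  by_contra hne
  rcases Nat.lt_or_gt_of_ne hne with hlt | hlt
  · simpa [prefixVertex, hlt] using congrFun h ⟨j, by grind⟩
  · simpa [prefixVertex, hlt] using congrFun h ⟨k, by grind⟩

theorem adj_prefixVertex_succ {j : ℕ} (hj : j < n) :
    (foldedCube n).Adj (prefixVertex j) (prefixVertex (j + 1)) := by
  refine adj_iff.mpr ⟨fun h => ?_, Or.inl (Finset.card_eq_one.mpr ⟨⟨j, hj⟩, ?_⟩)⟩
  · simpa [prefixVertex] using congrFun h ⟨j, hj⟩
  · ext i
    simp only [prefixVertex, Order.lt_add_one_iff, ne_eq, decide_eq_decide, Finset.mem_filter,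
      Finset.mem_univ, true_and, Finset.mem_singleton, Fin.ext_iff]
    omega

theorem adj_prefixVertex_zero (hn : n ≠ 0) :
    (foldedCube n).Adj (prefixVertex n) (prefixVertex 0) := by
  have hcompl (i : Fin n) : prefixVertex n i ≠ prefixVertex 0 i := by simp [prefixVertex]
  exact adj_iff.mpr ⟨fun h => hcompl ⟨0, by omega⟩ (congrFun h _), Or.inr hcompl⟩

theorem cycleGraph_isContained (hn : n ≠ 0) : cycleGraph (n + 1) ⊑ foldedCube n := by
  refine ⟨Hom.toCopy ⟨fun j => prefixVertex j, fun {j k} hjk => ?_⟩ fun j k h =>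
    Fin.ext (prefixVertex_injOn (Nat.le_of_lt_succ j.isLt) (Nat.le_of_lt_succ k.isLt) h)⟩
  wlog h : (k - j).val = 1 generalizing j k
  · exact (this hjk.symm ((cycleGraph_adj'.mp hjk).resolve_right h)).symm
  rcases le_or_gt j k with hle | hlt
  · rw [Fin.sub_val_of_le hle] at h
    rw [show k.val = j.val + 1 by omega]
    exact adj_prefixVertex_succ (by omega)
  · rw [Fin.coe_sub_iff_lt.mpr hlt] at h
    rw [show j.val = n by omega, show k.val = 0 by omega]
    exact adj_prefixVertex_zero hn

end foldedCube

theorem stmt6_general (n : ℕ) (hn : Even n) (u : Fin n → Bool)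
    (c : (foldedCube n).Walk u u) (hodd : Odd c.length)
    (hmin : ∀ (v : Fin n → Bool) (c' : (foldedCube n).Walk v v),
      c'.IsCycle → Odd c'.length → c.length ≤ c'.length) :
    c.length = n + 1 ∧ ∃! e : Sym2 (Fin n → Bool), e ∈ c.edges ∧ IsCompEdge n e := by
  classical
  have hk := foldedCube.odd_countP_compl c hn hodd
  have hlow := foldedCube.add_countP_compl_le_length c hk
  have hn0 : n ≠ 0 := by
    rintro rfl
    obtain ⟨d, -, -⟩ := List.countP_pos_iff.mp hk.pos
    exact d.adj.ne (Subsingleton.elim _ _)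
  have hn2 : 2 < n + 1 := by
    have := even_iff_two_dvd.mp hn
    omega
  obtain ⟨v, c', hc', hlen'⟩ :=
    (cycleGraph_isContained_iff hn2).mp (foldedCube.cycleGraph_isContained hn0)
  have hup := hmin v c' hc' (hlen' ▸ hn.add_one)
  have hk1 : c.darts.countP (fun d => ∀ i, d.fst i ≠ d.snd i) = 1 := by
    obtain ⟨j, hj⟩ := hk
    omega
  refine ⟨by omega, List.existsUnique_of_countP_eq_one ?_⟩
  simpa only [Walk.edges, List.countP_map, Function.comp_def,
    foldedCube.isCompEdge_dart_edge_iff] using hk1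

theorem stmt6 (n : ℕ) (hn : Even n) (u : Fin n → Bool)
    (c : (foldedCube n).Walk u u) (hc : c.IsCycle) (hodd : Odd c.length)
    (hmin : ∀ (v : Fin n → Bool) (c' : (foldedCube n).Walk v v),
      c'.IsCycle → Odd c'.length → c.length ≤ c'.length) :
    c.length = n + 1 ∧ ∃! e : Sym2 (Fin n → Bool), e ∈ c.edges ∧ IsCompEdge n e :=
  stmt6_general n hn u c hodd hmin
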